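/- arXiv:2102.10873 — 4 statements merged into one kernel-verified Lean document; each statement's English description precedes it below -/
import Mathlib

section
/- Let y : ℝ^{d_0} → ℝ^{d_L} be the feedforward network y(x) = Φ_L(W_L Φ_{L-1}(W_{L-1} ··· Φ_1(W_1 x + b_1) ··· ) + b_L), where each activation Φ_l : ℝ → ℝ is differentiable and applied coordinatewise. If (W_PL)_{i_L i_0} = 0, then the partial derivative ∂y_{i_L}/∂x_{i_0} equals 0 for every x ∈ ℝ^{d_0}. -/
open Matrix

/-- The ordinary matrix product `M_L * M_{L-1} * ⋯ * M_1` of a chain of matrices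
`M_l ∈ ℝ^{d_l × d_{l-1}}` (the empty product being the identity). -/
noncomputable def chainProd (d : ℕ → ℕ)
    (M : ∀ l : ℕ, Matrix (Fin (d (l + 1))) (Fin (d l)) ℝ) :
    (L : ℕ) → Matrix (Fin (d L)) (Fin (d 0)) ℝ
  | 0 => 1
  | L + 1 => M L * chainProd d M L

/-- The feedforward network
`y(x) = Φ_L(W_L Φ_{L-1}(W_{L-1} ⋯ Φ_1(W_1 x + b_1) ⋯) + b_L)`,
with element-wise activation functions `Φ_l : ℝ → ℝ` applied coordinatewise. -/
noncomputable def netOut (d : ℕ → ℕ)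
    (W : ∀ l : ℕ, Matrix (Fin (d (l + 1))) (Fin (d l)) ℝ)
    (b : ∀ l : ℕ, Fin (d (l + 1)) → ℝ) (Φ : ℕ → ℝ → ℝ) :
    (L : ℕ) → (Fin (d 0) → ℝ) → Fin (d L) → ℝ
  | 0, x => x
  | L + 1, x => fun i => Φ L ((W L).mulVec (netOut d W b Φ L x) i + b L i)

/-!
By the chain rule, `∂y_i/∂x_{i₀}` for the last layer is `Φ'(⋯) · ∑_j W_{ij} ∂z_j/∂x_{i₀}`, where `W` is
the last weight matrix and `z` the output of the previous layer. The squared weights are nonnegative, so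
if `P` is the product of the earlier squared matrices then `(W² P)_{i i₀} = 0` forces `W_{ij} = 0` or
`P_{j i₀} = 0` for every `j`; induction on the depth kills every term of the sum.
-/

section chainProd

variable {d : ℕ → ℕ} {M : ∀ l : ℕ, Matrix (Fin (d (l + 1))) (Fin (d l)) ℝ}

theorem chainProd_nonneg (hM : ∀ l i j, 0 ≤ M l i j) (L : ℕ) (i : Fin (d L)) (j : Fin (d 0)) :
    0 ≤ chainProd d M L i j := by
  induction L with
  | zero => rw [chainProd, one_apply]; split_ifs <;> norm_num
  | succ L ih =>
    rw [chainProd, mul_apply]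
    exact Finset.sum_nonneg fun k _ => mul_nonneg (hM L i k) (ih k)

theorem chainProd_succ_apply_eq_zero (hM : ∀ l i j, 0 ≤ M l i j) {L : ℕ} {i : Fin (d (L + 1))}
    {k : Fin (d 0)} (h : chainProd d M (L + 1) i k = 0) (j : Fin (d L)) :
    M L i j = 0 ∨ chainProd d M L j k = 0 := by
  rw [chainProd, mul_apply] at h
  exact mul_eq_zero.mp <| (Finset.sum_eq_zero_iff_of_nonneg fun j _ =>
    mul_nonneg (hM L i j) (chainProd_nonneg hM L j k)).mp h j (Finset.mem_univ j)

end chainProd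

section netOut

variable {d : ℕ → ℕ} {W : ∀ l : ℕ, Matrix (Fin (d (l + 1))) (Fin (d l)) ℝ}
  {b : ∀ l : ℕ, Fin (d (l + 1)) → ℝ} {Φ : ℕ → ℝ → ℝ}

theorem netOut_succ_apply (L : ℕ) (x : Fin (d 0) → ℝ) (i : Fin (d (L + 1))) :
    netOut d W b Φ (L + 1) x i = Φ L ((W L *ᵥ netOut d W b Φ L x) i + b L i) :=
  rfl

theorem differentiable_netOut (hΦ : ∀ l, Differentiable ℝ (Φ l)) (L : ℕ) (i : Fin (d L)) :
    Differentiable ℝ (fun x => netOut d W b Φ L x i) := by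
  induction L with
  | zero => exact differentiable_apply i
  | succ L ih =>
    simp only [netOut_succ_apply, mulVec, dotProduct]
    fun_prop

theorem fderiv_netOut_succ_apply (hΦ : ∀ l, Differentiable ℝ (Φ l)) (L : ℕ)
    (i : Fin (d (L + 1))) (x v : Fin (d 0) → ℝ) :
    fderiv ℝ (fun x => netOut d W b Φ (L + 1) x i) x v =
      deriv (Φ L) ((W L *ᵥ netOut d W b Φ L x) i + b L i) *
        ∑ j, W L i j * fderiv ℝ (fun x => netOut d W b Φ L x j) x v := by
  have hpre : HasFDerivAt (fun x => (W L *ᵥ netOut d W b Φ L x) i + b L i)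
      (∑ j, W L i j • fderiv ℝ (fun x => netOut d W b Φ L x j) x) x := by
    simp only [mulVec, dotProduct]
    exact (HasFDerivAt.fun_sum fun j _ =>
      (differentiable_netOut hΦ L j x).hasFDerivAt.const_mul (W L i j)).add_const _
  simp only [netOut_succ_apply]
  rw [← Function.comp_def (Φ L), ((hΦ L _).hasDerivAt.comp_hasFDerivAt x hpre).fderiv]
  simp

theorem fderiv_netOut_single_eq_zero_of_chainProd_sq_eq_zero (hΦ : ∀ l, Differentiable ℝ (Φ l))
    {L : ℕ} {i0 : Fin (d 0)} {iL : Fin (d L)}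
    (h : chainProd d (fun l => (W l).map (· ^ 2)) L iL i0 = 0) (x : Fin (d 0) → ℝ) :
    fderiv ℝ (fun x => netOut d W b Φ L x iL) x (Pi.single i0 1) = 0 := by
  induction L with
  | zero =>
    have hne : iL ≠ i0 := by rintro rfl; simp [chainProd] at h
    rw [show (fun x => netOut d W b Φ 0 x iL) = fun x => x iL from rfl,
      (hasFDerivAt_apply iL x).fderiv]
    exact Pi.single_eq_of_ne hne 1
  | succ L ih =>
    rw [fderiv_netOut_succ_apply hΦ]
    refine mul_eq_zero_of_right _ (Finset.sum_eq_zero fun j _ => ?_)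
    rcases chainProd_succ_apply_eq_zero (fun l i j => sq_nonneg (W l i j)) h j with hW | hj
    · rw [pow_eq_zero_iff two_ne_zero |>.mp hW, zero_mul]
    · rw [ih hj, mul_zero]

end netOut

/-- If the `(i_L, i_0)` entry of the path lasso matrix
`W_PL = sqrt((W_L)² ⋯ (W_1)²)` is zero, then the partial derivative
`∂y_{i_L}/∂x_{i_0}` of the feedforward network vanishes at every `x ∈ ℝ^{d_0}`. -/
theorem pathLasso_zero_implies_partialDeriv_zero (L : ℕ) (d : ℕ → ℕ)
    (W : ∀ l : ℕ, Matrix (Fin (d (l + 1))) (Fin (d l)) ℝ)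
    (b : ∀ l : ℕ, Fin (d (l + 1)) → ℝ) (Φ : ℕ → ℝ → ℝ)
    (hΦ : ∀ l, Differentiable ℝ (Φ l))
    (i0 : Fin (d 0)) (iL : Fin (d L))
    (hzero :
      Real.sqrt ((chainProd d (fun l => (W l).map (fun a => a ^ 2)) L) iL i0) = 0) :
    ∀ x : Fin (d 0) → ℝ,
      fderiv ℝ (fun x => netOut d W b Φ L x iL) x (Pi.single i0 1) = 0 :=
  fderiv_netOut_single_eq_zero_of_chainProd_sq_eq_zero hΦ <|
    (Real.sqrt_eq_zero (chainProd_nonneg (fun l i j => sq_nonneg (W l i j)) L iL i0)).mp hzero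
end

section
/- Let θ ∈ ℝ^d with θ ≠ 0 and let α, λ > 0. The function z ↦ (1/2)‖z − θ‖₂² + αλ‖z‖₂ on ℝ^d attains its unique minimum at z* = θ · (1 − αλ/‖θ‖₂)^+, where (x)^+ := max(x, 0) and ‖·‖₂ is the Euclidean norm. -/
/-!
The objective `f z = ½‖z - θ‖² + c‖z‖` satisfies
`½‖z - θ‖² = ½‖p - θ‖² - ⟪θ - p, z - p⟫ + ½‖z - p‖²` for every `p`. Hence as soon as `θ - p` is a
subgradient of `c‖·‖` at `p`, i.e. `⟪θ - p, z - p⟫ ≤ c (‖z‖ - ‖p‖)` for all `z`, we get the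
quadratic growth `f p + ½‖z - p‖² ≤ f z`, and `p` is the strict minimiser. For
`p = (1 - c/‖θ‖)⁺ θ` the subgradient inequality is Cauchy–Schwarz: if `‖θ‖ ≤ c` then `p = 0`,
and otherwise `θ - p = (c/‖θ‖) θ` and `‖p‖ = ‖θ‖ - c`.
-/

open RealInnerProductSpace

section

variable {E : Type*} [NormedAddCommGroup E] [InnerProductSpace ℝ E]

noncomputable def groupLassoProx (c : ℝ) (θ : E) : E := max (1 - c / ‖θ‖) 0 • θ

theorem groupLassoProx_eq_zero {c : ℝ} {θ : E} (h : ‖θ‖ ≤ c) : groupLassoProx c θ = 0 := by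
  rcases (norm_nonneg θ).eq_or_lt with hθ | hθ
  · simp [groupLassoProx, norm_eq_zero.mp hθ.symm]
  · have : max (1 - c / ‖θ‖) 0 = 0 := max_eq_right (by linarith [(one_le_div hθ).mpr h])
    simp [groupLassoProx, this]

theorem groupLassoProx_eq_of_lt {c : ℝ} {θ : E} (hc : 0 ≤ c) (h : c < ‖θ‖) :
    groupLassoProx c θ = (1 - c / ‖θ‖) • θ := by
  have : c / ‖θ‖ ≤ 1 := (div_le_one (hc.trans_lt h)).mpr h.le
  rw [groupLassoProx, max_eq_left (by linarith)]

theorem inner_sub_groupLassoProx_le {c : ℝ} (hc : 0 ≤ c) (θ z : E) :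
    ⟪θ - groupLassoProx c θ, z - groupLassoProx c θ⟫ ≤ c * (‖z‖ - ‖groupLassoProx c θ‖) := by
  rcases le_or_gt ‖θ‖ c with h | h
  · rw [groupLassoProx_eq_zero h, sub_zero, sub_zero, norm_zero, sub_zero]
    exact (real_inner_le_norm θ z).trans (mul_le_mul_of_nonneg_right h (norm_nonneg z))
  · have ht : 0 < ‖θ‖ := hc.trans_lt h
    have hshrink : c / ‖θ‖ ≤ 1 := (div_le_one ht).mpr h.le
    have hresidual : θ - (1 - c / ‖θ‖) • θ = (c / ‖θ‖) • θ := by module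
    have hnorm : ‖(1 - c / ‖θ‖) • θ‖ = ‖θ‖ - c := by
      rw [norm_smul, Real.norm_of_nonneg (by linarith)]
      field_simp
    rw [groupLassoProx_eq_of_lt hc h, hresidual, hnorm, inner_smul_left, inner_sub_right,
      real_inner_smul_right, real_inner_self_eq_norm_sq, conj_trivial]
    calc c / ‖θ‖ * (⟪θ, z⟫ - (1 - c / ‖θ‖) * ‖θ‖ ^ 2)
        ≤ c / ‖θ‖ * (‖θ‖ * ‖z‖ - (1 - c / ‖θ‖) * ‖θ‖ ^ 2) := by
          gcongr
          exact real_inner_le_norm θ z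
      _ = c * (‖z‖ - (‖θ‖ - c)) := by
          field_simp

theorem half_norm_sub_sq_add_le_of_subgradient {c : ℝ} {θ p : E}
    (hp : ∀ z, ⟪θ - p, z - p⟫ ≤ c * (‖z‖ - ‖p‖)) (z : E) :
    1 / 2 * ‖p - θ‖ ^ 2 + c * ‖p‖ + 1 / 2 * ‖z - p‖ ^ 2 ≤ 1 / 2 * ‖z - θ‖ ^ 2 + c * ‖z‖ := by
  have hexpand := norm_add_sq_real (z - p) (p - θ)
  have hcross : ⟪z - p, p - θ⟫ = -⟪θ - p, z - p⟫ := by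
    rw [← neg_sub θ p, inner_neg_right, real_inner_comm]
  rw [sub_add_sub_cancel, hcross] at hexpand
  linarith [hp z]

end

theorem groupLasso_prox_is_unique_min_general (d : ℕ) (θ : EuclideanSpace ℝ (Fin d))
    (α lam : ℝ) (hα : 0 < α) (hlam : 0 < lam) :
    ∀ z : EuclideanSpace ℝ (Fin d), z ≠ (max (1 - α * lam / ‖θ‖) 0) • θ →
      (1 / 2) * ‖(max (1 - α * lam / ‖θ‖) 0) • θ - θ‖ ^ 2 +
          α * lam * ‖(max (1 - α * lam / ‖θ‖) 0) • θ‖ <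
        (1 / 2) * ‖z - θ‖ ^ 2 + α * lam * ‖z‖ := by
  intro z hz
  have hgrowth := half_norm_sub_sq_add_le_of_subgradient
    (inner_sub_groupLassoProx_le (mul_pos hα hlam).le θ) z
  have hdist : 0 < ‖z - groupLassoProx (α * lam) θ‖ := norm_pos_iff.mpr (sub_ne_zero.mpr hz)
  unfold groupLassoProx at hgrowth hdist
  linarith [pow_pos hdist 2]

/-- For `θ ∈ ℝ^d` with `θ ≠ 0` and `α, λ > 0`, the function
`z ↦ (1/2)‖z − θ‖₂² + αλ‖z‖₂` attains its unique minimum at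
`z* = θ · (1 − αλ/‖θ‖₂)^+`. -/
theorem groupLasso_prox_is_unique_min (d : ℕ) (θ : EuclideanSpace ℝ (Fin d))
    (hθ : θ ≠ 0) (α lam : ℝ) (hα : 0 < α) (hlam : 0 < lam) :
    ∀ z : EuclideanSpace ℝ (Fin d), z ≠ (max (1 - α * lam / ‖θ‖) 0) • θ →
      (1 / 2) * ‖(max (1 - α * lam / ‖θ‖) 0) • θ - θ‖ ^ 2 +
          α * lam * ‖(max (1 - α * lam / ‖θ‖) 0) • θ‖ <
        (1 / 2) * ‖z - θ‖ ^ 2 + α * lam * ‖z‖ :=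
  groupLasso_prox_is_unique_min_general d θ α lam hα hlam
end

section
/- Let V ∈ ℝ^{m × n}, W ∈ ℝ^{m × r}, H ∈ ℝ^{r × n}, let λ_1 ≥ 0 and λ_2 ≥ 0, and fix indices i ∈ {1,...,m} and r' ∈ {1,...,r}. Define g : ℝ → ℝ by g(s) = (1/2) Σ_{j=1}^{n} ( V_{ij} − (W H)_{ij} − s H_{r'j} )² + λ_1 ( W_{ir'} + s ) + (λ_2/2) ( W_{ir'} + s )². If (H Hᵀ)_{r'r'} + λ_2 > 0, then g is a quadratic function of s whose unique minimizer is s* = ( (V Hᵀ − W H Hᵀ)_{ir'} − λ_1 − λ_2 W_{ir'} ) / ( (H Hᵀ)_{r'r'} + λ_2 ). -/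
open Matrix

/-- The coordinate-descent update for one entry of the left factor
in penalized NMF: the objective
`g(s) = (1/2) Σ_j (V_{ij} − (WH)_{ij} − s H_{r'j})² + λ₁(W_{ir'} + s) + (λ₂/2)(W_{ir'} + s)²`
is a quadratic function of `s` whose unique minimizer is
`s* = ((V Hᵀ − W H Hᵀ)_{ir'} − λ₁ − λ₂ W_{ir'}) / ((H Hᵀ)_{r'r'} + λ₂)`,
provided `(H Hᵀ)_{r'r'} + λ₂ > 0`. -/
theorem nmf_left_factor_update (m n r : ℕ)
    (V : Matrix (Fin m) (Fin n) ℝ) (W : Matrix (Fin m) (Fin r) ℝ)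
    (H : Matrix (Fin r) (Fin n) ℝ) (l1 l2 : ℝ) (hl1 : 0 ≤ l1) (hl2 : 0 ≤ l2)
    (i : Fin m) (r' : Fin r)
    (hpos : 0 < (H * Hᵀ) r' r' + l2) :
    let g : ℝ → ℝ := fun s =>
      (1 / 2) * ∑ j, (V i j - (W * H) i j - s * H r' j) ^ 2 +
        l1 * (W i r' + s) + (l2 / 2) * (W i r' + s) ^ 2
    let sstar : ℝ :=
      ((V * Hᵀ - W * H * Hᵀ) i r' - l1 - l2 * W i r') / ((H * Hᵀ) r' r' + l2)
    (∃ a b c : ℝ, 0 < a ∧ ∀ s : ℝ, g s = a * s ^ 2 + b * s + c) ∧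
      ∀ s : ℝ, s ≠ sstar → g sstar < g s := by
  intro g sstar
  have hA0 : (H * Hᵀ) r' r' + l2 ≠ 0 := ne_of_gt hpos
  have hsum2 : ∑ j, H r' j ^ 2 = (H * Hᵀ) r' r' := by
    simp [Matrix.mul_apply, Matrix.transpose_apply, sq]
  have hcross : ∑ j, (V i j - (W * H) i j) * H r' j = (V * Hᵀ - W * H * Hᵀ) i r' := by
    simp [Matrix.mul_apply, Matrix.transpose_apply, Matrix.sub_apply, sub_mul,
      Finset.sum_sub_distrib]
  have expand : ∀ s : ℝ, ∑ j, (V i j - (W * H) i j - s * H r' j) ^ 2 =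
      (∑ j, (V i j - (W * H) i j) ^ 2) -
      2 * s * (∑ j, (V i j - (W * H) i j) * H r' j) + s ^ 2 * ∑ j, H r' j ^ 2 := by
    intro s
    rw [Finset.mul_sum, Finset.mul_sum, ← Finset.sum_sub_distrib, ← Finset.sum_add_distrib]
    exact Finset.sum_congr rfl fun j _ => by ring
  set N : ℝ := (V * Hᵀ - W * H * Hᵀ) i r' - l1 - l2 * W i r' with hN
  set A : ℝ := (H * Hᵀ) r' r' + l2 with hA
  set c : ℝ := (1 / 2) * (∑ j, (V i j - (W * H) i j) ^ 2) + l1 * W i r' +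
      (l2 / 2) * (W i r') ^ 2 with hc
  have key : ∀ s : ℝ, g s = (A / 2) * s ^ 2 + (-N) * s + c := by
    intro s
    show (1 / 2) * ∑ j, (V i j - (W * H) i j - s * H r' j) ^ 2 +
        l1 * (W i r' + s) + (l2 / 2) * (W i r' + s) ^ 2 = _
    rw [expand, hsum2, hcross, hN, hA, hc]
    ring
  have hA0' : A ≠ 0 := hA0
  have hApos : 0 < A := hpos
  constructor
  · exact ⟨A / 2, -N, c, by positivity, key⟩
  · intro s hs
    have hss : sstar = N / A := rfl
    have hdiff : g s - g sstar = (A / 2) * (s - N / A) ^ 2 := by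
      rw [key s, key sstar, hss]
      field_simp
      ring
    have hne : s - N / A ≠ 0 := by
      rw [← hss]; exact sub_ne_zero.mpr hs
    have : 0 < (A / 2) * (s - N / A) ^ 2 := by positivity
    have h3 : 0 < g s - g sstar := by rw [hdiff]; exact this
    linarith
end

section
/- Let V ∈ ℝ^{m × n}, W ∈ ℝ^{m × p'}, M ∈ ℝ^{p' × r}, H ∈ ℝ^{r × n}, let λ_1 ≥ 0 and λ_2 ≥ 0, and fix indices p ∈ {1,...,p'} and r' ∈ {1,...,r}. Define g : ℝ → ℝ by g(s) = (1/2) Σ_{i=1}^{m} Σ_{j=1}^{n} ( V_{ij} − (W M H)_{ij} − s W_{ip} H_{r'j} )² + λ_1 ( M_{pr'} + s ) + (λ_2/2) ( M_{pr'} + s )². If (Wᵀ W)_{pp} (H Hᵀ)_{r'r'} + λ_2 > 0, then g is a quadratic function of s whose unique minimizer is s* = ( (Wᵀ V Hᵀ − Wᵀ W M H Hᵀ)_{pr'} − λ_1 − λ_2 M_{pr'} ) / ( (Wᵀ W)_{pp} (H Hᵀ)_{r'r'} + λ_2 ). -/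
open Matrix

/-!
Perturbing the single entry `M p r'` by `s` perturbs `W M H` by the rank-one matrix
`s (W e_p)(e_{r'}ᵀ H)`, so the residual term of `g` is a quadratic in `s` with leading coefficient
`(1/2)(Wᵀ W)_{pp} (H Hᵀ)_{r'r'}` and linear coefficient `-(Wᵀ (V - W M H) Hᵀ)_{pr'}`; the
penalties add `λ₂/2` and `λ₁ + λ₂ M_{pr'}`. A quadratic with positive leading coefficient is
strictly minimized exactly at its vertex `-b / (2a)`, which is `s*`.
-/

theorem quadratic_lt_of_ne_neg_div {𝕜 : Type*} [Field 𝕜] [LinearOrder 𝕜] [IsStrictOrderedRing 𝕜]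
    {a b c s : 𝕜} (ha : 0 < a) (hs : s ≠ -b / (2 * a)) :
    a * (-b / (2 * a)) ^ 2 + b * (-b / (2 * a)) + c < a * s ^ 2 + b * s + c := by
  have hsq : 0 < (s - -b / (2 * a)) ^ 2 := sq_pos_of_ne_zero (sub_ne_zero.mpr hs)
  have hdiff : a * s ^ 2 + b * s + c - (a * (-b / (2 * a)) ^ 2 + b * (-b / (2 * a)) + c)
      = a * (s - -b / (2 * a)) ^ 2 := by
    field_simp
    ring
  linarith [mul_pos ha hsq]

theorem sum_sum_sub_mul_sq {ι κ R : Type*} [Fintype ι] [Fintype κ] [CommRing R]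
    (e x : ι → κ → R) (s : R) :
    ∑ i, ∑ j, (e i j - s * x i j) ^ 2 =
      ∑ i, ∑ j, e i j ^ 2 - 2 * s * ∑ i, ∑ j, e i j * x i j + s ^ 2 * ∑ i, ∑ j, x i j ^ 2 := by
  calc ∑ i, ∑ j, (e i j - s * x i j) ^ 2
      = ∑ i, ∑ j, (e i j ^ 2 - 2 * s * (e i j * x i j) + s ^ 2 * x i j ^ 2) :=
        Finset.sum_congr rfl fun i _ => Finset.sum_congr rfl fun j _ => by ring
    _ = _ := by simp only [Finset.sum_add_distrib, Finset.sum_sub_distrib, Finset.mul_sum]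

theorem sum_sum_mul_sq {ι κ R : Type*} [Fintype ι] [Fintype κ] [CommRing R]
    (u : ι → R) (v : κ → R) :
    ∑ i, ∑ j, (u i * v j) ^ 2 = (∑ i, u i ^ 2) * ∑ j, v j ^ 2 := by
  simp only [mul_pow, Finset.sum_mul_sum]

namespace Matrix

theorem transpose_mul_self_apply_self {m n R : Type*} [Fintype m] [CommRing R]
    (A : Matrix m n R) (k : n) : (Aᵀ * A) k k = ∑ i, A i k ^ 2 := by
  simp [mul_apply, sq]

theorem mul_transpose_self_apply_self {m n R : Type*} [Fintype n] [CommRing R]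
    (A : Matrix m n R) (k : m) : (A * Aᵀ) k k = ∑ j, A k j ^ 2 := by
  simp [mul_apply, sq]

theorem transpose_mul_mul_transpose_apply {l m n o R : Type*} [Fintype m] [Fintype n]
    [CommRing R] (A : Matrix m o R) (E : Matrix m n R) (B : Matrix l n R) (k : o) (k' : l) :
    (Aᵀ * E * Bᵀ) k k' = ∑ i, ∑ j, E i j * (A i k * B k' j) := by
  simp only [mul_apply, transpose_apply, Finset.sum_mul]
  rw [Finset.sum_comm]
  exact Finset.sum_congr rfl fun i _ => Finset.sum_congr rfl fun j _ => by ring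

theorem sum_sum_sub_mul_col_mul_row_sq {l m n o R : Type*} [Fintype m] [Fintype n] [CommRing R]
    (E : Matrix m n R) (A : Matrix m o R) (B : Matrix l n R) (k : o) (k' : l) (s : R) :
    ∑ i, ∑ j, (E i j - s * A i k * B k' j) ^ 2 =
      ∑ i, ∑ j, E i j ^ 2 - 2 * s * (Aᵀ * E * Bᵀ) k k' +
        s ^ 2 * ((Aᵀ * A) k k * (B * Bᵀ) k' k') := by
  rw [transpose_mul_mul_transpose_apply, transpose_mul_self_apply_self,
    mul_transpose_self_apply_self, ← sum_sum_mul_sq]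
  refine Eq.trans ?_ (sum_sum_sub_mul_sq E (fun i j => A i k * B k' j) s)
  simp only [mul_assoc]

end Matrix

theorem nmf_middle_factor_update_general (m n p' r : ℕ)
    (V : Matrix (Fin m) (Fin n) ℝ) (W : Matrix (Fin m) (Fin p') ℝ)
    (M : Matrix (Fin p') (Fin r) ℝ) (H : Matrix (Fin r) (Fin n) ℝ)
    (l1 l2 : ℝ)
    (p : Fin p') (r' : Fin r)
    (hpos : 0 < (Wᵀ * W) p p * (H * Hᵀ) r' r' + l2) :
    let g : ℝ → ℝ := fun s =>
      (1 / 2) * ∑ i, ∑ j, (V i j - (W * M * H) i j - s * W i p * H r' j) ^ 2 +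
        l1 * (M p r' + s) + (l2 / 2) * (M p r' + s) ^ 2
    let sstar : ℝ :=
      ((Wᵀ * V * Hᵀ - Wᵀ * W * M * H * Hᵀ) p r' - l1 - l2 * M p r') /
        ((Wᵀ * W) p p * (H * Hᵀ) r' r' + l2)
    (∃ a b c : ℝ, 0 < a ∧ ∀ s : ℝ, g s = a * s ^ 2 + b * s + c) ∧
      ∀ s : ℝ, s ≠ sstar → g sstar < g s := by
  intro g sstar
  set A := (Wᵀ * W) p p * (H * Hᵀ) r' r' + l2
  have hresid : Wᵀ * V * Hᵀ - Wᵀ * W * M * H * Hᵀ = Wᵀ * (V - W * M * H) * Hᵀ := by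
    simp only [Matrix.mul_sub, Matrix.sub_mul, Matrix.mul_assoc]
  set L := (Wᵀ * V * Hᵀ - Wᵀ * W * M * H * Hᵀ) p r'
  have hquad : ∀ s, g s = A / 2 * s ^ 2 + (l1 + l2 * M p r' - L) * s +
      (1 / 2 * ∑ i, ∑ j, (V i j - (W * M * H) i j) ^ 2 + l1 * M p r' + l2 / 2 * M p r' ^ 2) := by
    intro s
    have hexpand := sum_sum_sub_mul_col_mul_row_sq (V - W * M * H) W H p r' s
    simp only [Matrix.sub_apply] at hexpand
    simp only [g, A, L, hresid, hexpand]
    ring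
  have hsstar : sstar = -(l1 + l2 * M p r' - L) / (2 * (A / 2)) := by
    simp only [sstar]
    ring
  refine ⟨⟨_, _, _, half_pos hpos, hquad⟩, fun s hs => ?_⟩
  rw [hquad, hquad, hsstar]
  exact quadratic_lt_of_ne_neg_div (half_pos hpos) (hsstar ▸ hs)

/-- The coordinate-descent update for one entry of the middle factor
in penalized three-factor NMF: the objective
`g(s) = (1/2) Σ_i Σ_j (V_{ij} − (WMH)_{ij} − s W_{ip} H_{r'j})² + λ₁(M_{pr'} + s) + (λ₂/2)(M_{pr'} + s)²`
is a quadratic function of `s` whose unique minimizer is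
`s* = ((Wᵀ V Hᵀ − Wᵀ W M H Hᵀ)_{pr'} − λ₁ − λ₂ M_{pr'}) / ((Wᵀ W)_{pp} (H Hᵀ)_{r'r'} + λ₂)`,
provided `(Wᵀ W)_{pp} (H Hᵀ)_{r'r'} + λ₂ > 0`. -/
theorem nmf_middle_factor_update (m n p' r : ℕ)
    (V : Matrix (Fin m) (Fin n) ℝ) (W : Matrix (Fin m) (Fin p') ℝ)
    (M : Matrix (Fin p') (Fin r) ℝ) (H : Matrix (Fin r) (Fin n) ℝ)
    (l1 l2 : ℝ) (hl1 : 0 ≤ l1) (hl2 : 0 ≤ l2)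
    (p : Fin p') (r' : Fin r)
    (hpos : 0 < (Wᵀ * W) p p * (H * Hᵀ) r' r' + l2) :
    let g : ℝ → ℝ := fun s =>
      (1 / 2) * ∑ i, ∑ j, (V i j - (W * M * H) i j - s * W i p * H r' j) ^ 2 +
        l1 * (M p r' + s) + (l2 / 2) * (M p r' + s) ^ 2
    let sstar : ℝ :=
      ((Wᵀ * V * Hᵀ - Wᵀ * W * M * H * Hᵀ) p r' - l1 - l2 * M p r') /
        ((Wᵀ * W) p p * (H * Hᵀ) r' r' + l2)
    (∃ a b c : ℝ, 0 < a ∧ ∀ s : ℝ, g s = a * s ^ 2 + b * s + c) ∧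
      ∀ s : ℝ, s ≠ sstar → g sstar < g s :=
  nmf_middle_factor_update_general m n p' r V W M H l1 l2 p r' hpos
end
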